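/- Let d ≥ 2, p ≥ 1, K ≥ 2. Let F_1,…,F_K and F'_1,…,F'_K be probability measures on ℝ^d with finite p-th moments, and let π ∈ Δ^K. Suppose F̄ and F̄' are measures whose projections along almost every direction θ ∈ S^{d-1} have quantile functions Q_{θ♯F̄} = Σ_k π_k Q_{θ♯F_k} and Q_{θ♯F̄'} = Σ_k π_k Q_{θ♯F'_k} respectively. Then SW_p^p(F̄, F̄') ≤ Σ_{k=1}^K π_k SW_p^p(F_k, F'_k) ≤ max_{1≤k≤K} SW_p^p(F_k, F'_k). -/

import Mathlib

open MeasureTheory Set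

/-- The p-th power of the p-Wasserstein distance, defined as the infimum of transport
costs over all couplings. -/
noncomputable def WpPow {E : Type*} [NormedAddCommGroup E] [MeasurableSpace E]
    (p : ℝ) (μ ν : Measure E) : ℝ :=
  sInf {c : ℝ | ∃ γ : Measure (E × E),
    γ.map Prod.fst = μ ∧ γ.map Prod.snd = ν ∧ c = ∫ z, ‖z.1 - z.2‖ ^ p ∂γ}

/-- The quantile function (generalized inverse CDF) of a measure on ℝ. -/
noncomputable def quantileFn (μ : Measure ℝ) (t : ℝ) : ℝ :=
  sInf {x : ℝ | t ≤ (μ (Iic x)).toReal}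

/-- The uniform (normalized surface) probability measure on the unit sphere of ℝ^d. -/
noncomputable def uniformSphere (d : ℕ) :
    Measure (Metric.sphere (0 : EuclideanSpace ℝ (Fin d)) 1) :=
  (((volume : Measure (EuclideanSpace ℝ (Fin d))).toSphere Set.univ)⁻¹) •
    (volume : Measure (EuclideanSpace ℝ (Fin d))).toSphere

/-- Projection of a point of ℝ^d onto the direction θ. -/
noncomputable def sphProj {d : ℕ} (θ : Metric.sphere (0 : EuclideanSpace ℝ (Fin d)) 1)
    (x : EuclideanSpace ℝ (Fin d)) : ℝ :=
  inner (𝕜 := ℝ) (θ : EuclideanSpace ℝ (Fin d)) x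

/-- The p-th power of the sliced Wasserstein distance on ℝ^d. -/
noncomputable def SWpPow {d : ℕ} (p : ℝ) (μ ν : Measure (EuclideanSpace ℝ (Fin d))) : ℝ :=
  ∫ θ, WpPow p (μ.map (sphProj θ)) (ν.map (sphProj θ)) ∂(uniformSphere d)

/-!
Along a fixed direction everything happens on the line, where the quantile coupling of `μ` and
`ν` is optimal for the cost `|x - y| ^ p`, so that `W_p^p(μ, ν) = ∫₀¹ |Q_μ - Q_ν| ^ p`. For the
optimality, write `|x - y| ^ p` as the mass, under `ds ⊗ d(p r₊ ^ (p - 1))`, of the triangles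
`{(s, r) | x ≤ s, s + r ≤ y}` and `{(s, r) | y ≤ s, s + r ≤ x}`; by Tonelli the cost of a coupling
becomes an integral of the masses it gives to south-east quadrants `Iic s ×ˢ Ici t`, and the
quantile coupling minimises each of these (Fréchet–Hoeffding).

If the quantile functions of the barycenters are `π`-averages, Jensen's inequality for
`t ↦ |t| ^ p` bounds the integrand `|Q̄ - Q̄'| ^ p` by the `π`-average of the `|Q_k - Q'_k| ^ p`;
integrating over `(0, 1)` and then over the directions gives the first inequality. The second
one says that a weighted average is at most the maximum.
-/

open ProbabilityTheory Filter Topology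
open scoped ENNReal

section Quantile

/-- `quantileFn μ` with its junk values off `(0, 1)` replaced by `0`: its sublevel sets are then
read off the cdf, which makes it measurable, also jointly in a parameter of `μ`. -/
noncomputable def quantileFnIoo (μ : Measure ℝ) : ℝ → ℝ :=
  (Ioo 0 1).indicator (quantileFn μ)

lemma quantileFnIoo_of_mem (μ : Measure ℝ) {u : ℝ} (hu : u ∈ Ioo (0 : ℝ) 1) :
    quantileFnIoo μ u = quantileFn μ u :=
  indicator_of_mem hu _

lemma quantileFn_le_iff (μ : Measure ℝ) [IsProbabilityMeasure μ] {u x : ℝ}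
    (hu : u ∈ Ioo (0 : ℝ) 1) : quantileFn μ u ≤ x ↔ u ≤ cdf μ x := by
  have hS : {y : ℝ | u ≤ (μ (Iic y)).toReal} = {y | u ≤ cdf μ y} := by
    simp [cdf_eq_real, measureReal_def]
  have hne : {y | u ≤ cdf μ y}.Nonempty := ((tendsto_cdf_atTop μ).eventually_const_le hu.2).exists
  have hbdd : BddBelow {y | u ≤ cdf μ y} := by
    obtain ⟨y₀, hy₀⟩ := ((tendsto_cdf_atBot μ).eventually_lt_const hu.1).exists
    exact ⟨y₀, fun y hy => le_of_not_gt fun hy₀y => (hy.trans (monotone_cdf μ hy₀y.le)).not_gt hy₀⟩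
  rw [quantileFn, hS]
  refine ⟨fun h => ?_, fun h => csInf_le hbdd h⟩
  -- the infimum is attained by right continuity of the cdf
  refine ge_of_tendsto (((cdf μ).right_continuous x).mono_left
    (nhdsWithin_mono x Ioi_subset_Ici_self)) ?_
  filter_upwards [self_mem_nhdsWithin] with y (hy : x < y)
  obtain ⟨z, hz, hzy⟩ := (csInf_lt_iff hbdd hne).mp (h.trans_lt hy)
  exact hz.trans (monotone_cdf μ hzy.le)

lemma monotoneOn_quantileFn (μ : Measure ℝ) [IsProbabilityMeasure μ] :
    MonotoneOn (quantileFn μ) (Ioo 0 1) := fun _ hu _ hv huv =>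
  (quantileFn_le_iff μ hu).mpr (huv.trans ((quantileFn_le_iff μ hv).mp le_rfl))

lemma measurable_quantileFnIoo_uncurry {α : Type*} [MeasurableSpace α] {κ : α → Measure ℝ}
    [∀ a, IsProbabilityMeasure (κ a)] (hκ : Measurable κ) :
    Measurable fun w : α × ℝ => quantileFnIoo (κ w.1) w.2 := by
  refine measurable_of_Iic fun x => ?_
  have hpre : (fun w : α × ℝ => quantileFnIoo (κ w.1) w.2) ⁻¹' Iic x =
      (Prod.snd ⁻¹' Ioo 0 1 ∩ {w | w.2 ≤ cdf (κ w.1) x}) ∪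
        ((Prod.snd ⁻¹' Ioo 0 1)ᶜ ∩ {_w | 0 ≤ x}) := by
    ext w
    by_cases hw : w.2 ∈ Ioo (0 : ℝ) 1
    · simp [quantileFnIoo, hw, quantileFn_le_iff _ hw]
    · simp [quantileFnIoo, hw]
  have hcdf : Measurable fun a => cdf (κ a) x := by
    simp_rw [cdf_eq_real, measureReal_def]
    exact ((Measure.measurable_coe measurableSet_Iic).comp hκ).ennreal_toReal
  rw [hpre]
  exact ((measurable_snd measurableSet_Ioo).inter
      (measurableSet_le measurable_snd (hcdf.comp measurable_fst))).union
    ((measurable_snd measurableSet_Ioo).compl.inter (MeasurableSet.const _))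

lemma measurable_quantileFnIoo (μ : Measure ℝ) [IsProbabilityMeasure μ] :
    Measurable (quantileFnIoo μ) :=
  (measurable_quantileFnIoo_uncurry (κ := fun _ : Unit => μ) measurable_const).comp
    ((measurable_const (a := ())).prodMk measurable_id)

lemma volume_Ioo_inter_Iic {b : ℝ} (hb : b ∈ Icc (0 : ℝ) 1) :
    volume (Ioo 0 1 ∩ Iic b) = ENNReal.ofReal b := by
  refine le_antisymm ?_ ?_
  · calc volume (Ioo 0 1 ∩ Iic b) ≤ volume (Ioc 0 b) :=
          measure_mono fun u hu => ⟨hu.1.1, hu.2⟩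
      _ = ENNReal.ofReal b := by rw [Real.volume_Ioc, sub_zero]
  · calc ENNReal.ofReal b = volume (Ioo 0 b) := by rw [Real.volume_Ioo, sub_zero]
      _ ≤ volume (Ioo 0 1 ∩ Iic b) :=
          measure_mono fun u hu => ⟨⟨hu.1, hu.2.trans_le hb.2⟩, hu.2.le⟩

lemma map_quantileFnIoo (μ : Measure ℝ) [IsProbabilityMeasure μ] :
    (volume.restrict (Ioo 0 1)).map (quantileFnIoo μ) = μ := by
  refine Measure.ext_of_Iic _ _ fun x => ?_
  rw [Measure.map_apply (measurable_quantileFnIoo μ) measurableSet_Iic,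
    Measure.restrict_apply' measurableSet_Ioo, ← ofReal_cdf,
    ← volume_Ioo_inter_Iic ⟨cdf_nonneg μ x, cdf_le_one μ x⟩]
  congr 1
  ext u
  by_cases hu : u ∈ Ioo (0 : ℝ) 1
  · simp [quantileFnIoo, hu, quantileFn_le_iff _ hu]
  · simp [hu]

lemma measure_Iio_le_of_le_quantileFn (ν : Measure ℝ) [IsProbabilityMeasure ν] {t u : ℝ}
    (hu : u ∈ Ioo (0 : ℝ) 1) (ht : t ≤ quantileFn ν u) : ν (Iio t) ≤ ENNReal.ofReal u := by
  rw [← map_quantileFnIoo ν, Measure.map_apply (measurable_quantileFnIoo ν) measurableSet_Iio,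
    Measure.restrict_apply' measurableSet_Ioo]
  calc volume (quantileFnIoo ν ⁻¹' Iio t ∩ Ioo 0 1) ≤ volume (Ioo 0 u) := by
        refine measure_mono fun v ⟨hvt, hv⟩ => ⟨hv.1, lt_of_not_ge fun huv => ?_⟩
        rw [mem_preimage, quantileFnIoo_of_mem ν hv, mem_Iio] at hvt
        exact (ht.trans (monotoneOn_quantileFn ν hu hv huv)).not_gt hvt
    _ = ENNReal.ofReal u := by rw [Real.volume_Ioo, sub_zero]

end Quantile

section Coupling

lemma isProbabilityMeasure_of_map_fst {μ : Measure ℝ} [IsProbabilityMeasure μ]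
    {γ : Measure (ℝ × ℝ)} (hγμ : γ.map Prod.fst = μ) : IsProbabilityMeasure γ := by
  subst hγμ
  exact Measure.isProbabilityMeasure_of_map Prod.fst

noncomputable def quantileCoupling (μ ν : Measure ℝ) : Measure (ℝ × ℝ) :=
  (volume.restrict (Ioo 0 1)).map fun u => (quantileFnIoo μ u, quantileFnIoo ν u)

variable (μ ν : Measure ℝ) [IsProbabilityMeasure μ] [IsProbabilityMeasure ν]

lemma measurable_quantileFnIoo_prodMk :
    Measurable fun u => (quantileFnIoo μ u, quantileFnIoo ν u) :=
  (measurable_quantileFnIoo μ).prodMk (measurable_quantileFnIoo ν)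

lemma quantileCoupling_map_fst : (quantileCoupling μ ν).map Prod.fst = μ := by
  rw [quantileCoupling, Measure.map_map measurable_fst (measurable_quantileFnIoo_prodMk μ ν)]
  exact map_quantileFnIoo μ

lemma quantileCoupling_map_snd : (quantileCoupling μ ν).map Prod.snd = ν := by
  rw [quantileCoupling, Measure.map_map measurable_snd (measurable_quantileFnIoo_prodMk μ ν)]
  exact map_quantileFnIoo ν

lemma quantileCoupling_map_swap : (quantileCoupling μ ν).map Prod.swap = quantileCoupling ν μ := by
  rw [quantileCoupling, Measure.map_map measurable_swap (measurable_quantileFnIoo_prodMk μ ν)]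
  rfl

instance : IsProbabilityMeasure (quantileCoupling μ ν) :=
  isProbabilityMeasure_of_map_fst (quantileCoupling_map_fst μ ν)

omit [IsProbabilityMeasure μ] [IsProbabilityMeasure ν] in
/-- Fréchet–Hoeffding lower bound. -/
lemma sub_measure_Iio_le_of_map {γ : Measure (ℝ × ℝ)} (hγμ : γ.map Prod.fst = μ)
    (hγν : γ.map Prod.snd = ν) (s t : ℝ) : μ (Iic s) - ν (Iio t) ≤ γ (Iic s ×ˢ Ici t) := by
  rw [← hγμ, ← hγν, Measure.map_apply measurable_fst measurableSet_Iic,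
    Measure.map_apply measurable_snd measurableSet_Iio, tsub_le_iff_right]
  refine (measure_mono fun (z : ℝ × ℝ) (hz : z.1 ≤ s) => ?_).trans (measure_union_le _ _)
  by_cases hzt : t ≤ z.2
  · exact Or.inl ⟨hz, hzt⟩
  · exact Or.inr (lt_of_not_ge hzt)

/-- The quantile coupling attains the Fréchet–Hoeffding bound. -/
lemma quantileCoupling_Iic_prod_Ici (s t : ℝ) :
    quantileCoupling μ ν (Iic s ×ˢ Ici t) ≤ μ (Iic s) - ν (Iio t) := by
  rw [quantileCoupling, Measure.map_apply (measurable_quantileFnIoo_prodMk μ ν)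
    (measurableSet_Iic.prod measurableSet_Ici), Measure.restrict_apply' measurableSet_Ioo,
    ← ofReal_cdf, ← ENNReal.ofReal_toReal (measure_ne_top ν (Iio t)),
    ← ENNReal.ofReal_sub _ ENNReal.toReal_nonneg, ← Real.volume_Icc]
  refine measure_mono fun u ⟨⟨(hus : quantileFnIoo μ u ≤ s), (htu : t ≤ quantileFnIoo ν u)⟩,
    hu⟩ => ⟨?_, ?_⟩
  · rw [quantileFnIoo_of_mem ν hu] at htu
    exact ENNReal.toReal_le_of_le_ofReal hu.1.le (measure_Iio_le_of_le_quantileFn ν hu htu)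
  · rw [quantileFnIoo_of_mem μ hu] at hus
    exact (quantileFn_le_iff μ hu).mp hus

end Coupling

section CostKernel

variable {p : ℝ}

/-- The derivative of `r ↦ (max r 0) ^ p`; for `p = 1` it jumps at `0`, so its Stieltjes
measure has an atom there. -/
noncomputable def rpowDerivStieltjes (hp : 1 ≤ p) : StieltjesFunction ℝ where
  toFun := (Ici 0).indicator fun r => p * r ^ (p - 1)
  mono' r s hrs := by
    by_cases hr : 0 ≤ r
    · simp only [indicator_of_mem (mem_Ici.2 hr), indicator_of_mem (mem_Ici.2 (hr.trans hrs))]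
      gcongr
    · rw [indicator_of_notMem (by simpa using hr)]
      exact indicator_nonneg (fun s (hs : 0 ≤ s) => by positivity) s
  right_continuous' x := by
    by_cases hx : 0 ≤ x
    · have hcont : Continuous fun r : ℝ => p * r ^ (p - 1) :=
        continuous_const.mul (continuous_id.rpow_const fun _ => Or.inr (by linarith))
      refine hcont.continuousWithinAt.congr (fun r hr => ?_) ?_
      · exact indicator_of_mem (mem_Ici.2 (hx.trans hr)) _
      · exact indicator_of_mem (mem_Ici.2 hx) _
    · refine (continuousAt_const.congr (f := fun _ => (0 : ℝ)) ?_).continuousWithinAt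
      filter_upwards [Iio_mem_nhds (lt_of_not_ge hx)] with r (hr : r < 0)
      exact (indicator_of_notMem (not_le.2 hr) _).symm

lemma rpowDerivStieltjes_measure_Iic (hp : 1 ≤ p) (x : ℝ) :
    (rpowDerivStieltjes hp).measure (Iic x) =
      ENNReal.ofReal ((Ici 0).indicator (fun r => p * r ^ (p - 1)) x) := by
  have hbot : Tendsto (rpowDerivStieltjes hp) atBot (𝓝 0) := by
    refine tendsto_const_nhds.congr' ?_
    filter_upwards [Iio_mem_atBot (0 : ℝ)] with r (hr : r < 0)
    exact (indicator_of_notMem (not_le.2 hr) (fun r : ℝ => p * r ^ (p - 1))).symm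
  rw [StieltjesFunction.measure_Iic _ hbot, sub_zero]
  rfl

noncomputable def costKernel (hp : 1 ≤ p) : Measure (ℝ × ℝ) :=
  volume.prod (rpowDerivStieltjes hp).measure

instance (hp : 1 ≤ p) : SFinite (costKernel hp) := by
  unfold costKernel; infer_instance

def triangle (a b : ℝ) : Set (ℝ × ℝ) := {w | a ≤ w.1 ∧ w.1 + w.2 ≤ b}

lemma measurableSet_triangle (a b : ℝ) : MeasurableSet (triangle a b) :=
  (measurableSet_le measurable_const measurable_fst).inter
    (measurableSet_le (measurable_fst.add measurable_snd) measurable_const)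

lemma rpowDerivStieltjes_measure_preimage_triangle (hp : 1 ≤ p) (a b s : ℝ) :
    (rpowDerivStieltjes hp).measure (Prod.mk s ⁻¹' triangle a b)
      = (Icc a b).indicator (fun s => ENNReal.ofReal (p * (b - s) ^ (p - 1))) s := by
  by_cases has : a ≤ s
  · have hpre : Prod.mk s ⁻¹' triangle a b = Iic (b - s) := by
      ext r; simp [triangle, has, le_sub_iff_add_le']
    rw [hpre, rpowDerivStieltjes_measure_Iic]
    by_cases hsb : s ≤ b
    · rw [indicator_of_mem (mem_Ici.2 (sub_nonneg.2 hsb)),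
        indicator_of_mem (show s ∈ Icc a b from ⟨has, hsb⟩)]
    · rw [indicator_of_notMem (by simpa using hsb), indicator_of_notMem fun h => hsb h.2,
        ENNReal.ofReal_zero]
  · have hpre : Prod.mk s ⁻¹' triangle a b = ∅ := by
      ext r; simp [triangle, has]
    rw [hpre, measure_empty, indicator_of_notMem fun h => has h.1]

lemma integral_mul_sub_rpow (hp : 0 < p) (a b : ℝ) :
    ∫ s in a..b, p * (b - s) ^ (p - 1) = (b - a) ^ p := by
  rw [intervalIntegral.integral_const_mul,
    intervalIntegral.integral_comp_sub_left (fun r => r ^ (p - 1)), sub_self,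
    integral_rpow (Or.inl (by linarith)), sub_add_cancel, Real.zero_rpow hp.ne', sub_zero]
  field_simp

lemma costKernel_triangle (hp : 1 ≤ p) (a b : ℝ) :
    costKernel hp (triangle a b) = ENNReal.ofReal (max (b - a) 0 ^ p) := by
  rw [costKernel, Measure.prod_apply (measurableSet_triangle a b)]
  simp_rw [rpowDerivStieltjes_measure_preimage_triangle]
  rw [lintegral_indicator measurableSet_Icc]
  rcases le_or_gt a b with hab | hba
  · rw [← ofReal_integral_eq_lintegral_ofReal, integral_Icc_eq_integral_Ioc,
      ← intervalIntegral.integral_of_le hab, integral_mul_sub_rpow (by linarith),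
      max_eq_left (sub_nonneg.2 hab)]
    · exact (continuous_const.mul ((continuous_const.sub continuous_id).rpow_const
        fun _ => Or.inr (by linarith))).integrableOn_Icc
    · filter_upwards [ae_restrict_mem measurableSet_Icc] with s hs
      have : 0 ≤ b - s := sub_nonneg.2 hs.2
      positivity
  · rw [Icc_eq_empty (not_le.2 hba), Measure.restrict_empty, lintegral_zero_measure,
      max_eq_right (by linarith), Real.zero_rpow (by linarith), ENNReal.ofReal_zero]

lemma ofReal_abs_sub_rpow_eq (hp : 1 ≤ p) (x y : ℝ) :
    ENNReal.ofReal (|x - y| ^ p)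
      = costKernel hp (triangle x y) + costKernel hp (triangle y x) := by
  rw [costKernel_triangle, costKernel_triangle]
  rcases le_total x y with hxy | hyx
  · rw [max_eq_left (sub_nonneg.2 hxy), max_eq_right (sub_nonpos.2 hxy),
      Real.zero_rpow (by linarith), ENNReal.ofReal_zero, add_zero, abs_sub_comm,
      abs_of_nonneg (sub_nonneg.2 hxy)]
  · rw [max_eq_right (sub_nonpos.2 hyx), max_eq_left (sub_nonneg.2 hyx),
      Real.zero_rpow (by linarith), ENNReal.ofReal_zero, zero_add,
      abs_of_nonneg (sub_nonneg.2 hyx)]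

lemma measurableSet_triangle_pairs :
    MeasurableSet {zw : (ℝ × ℝ) × (ℝ × ℝ) | zw.2 ∈ triangle zw.1.1 zw.1.2} :=
  (measurableSet_le measurable_fst.fst measurable_snd.fst).inter
    (measurableSet_le (measurable_snd.fst.add measurable_snd.snd) measurable_fst.snd)

lemma measurable_costKernel_triangle (hp : 1 ≤ p) :
    Measurable fun z : ℝ × ℝ => costKernel hp (triangle z.1 z.2) :=
  measurable_measure_prodMk_left measurableSet_triangle_pairs

lemma lintegral_costKernel_triangle (hp : 1 ≤ p) (κ : Measure (ℝ × ℝ)) [SFinite κ] :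
    ∫⁻ z, costKernel hp (triangle z.1 z.2) ∂κ
      = ∫⁻ w, κ (Iic w.1 ×ˢ Ici (w.1 + w.2)) ∂costKernel hp :=
  calc _ = κ.prod (costKernel hp) _ := (Measure.prod_apply measurableSet_triangle_pairs).symm
    _ = _ := Measure.prod_apply_symm measurableSet_triangle_pairs

lemma lintegral_abs_sub_rpow_eq (hp : 1 ≤ p) (κ : Measure (ℝ × ℝ)) [SFinite κ] :
    ∫⁻ z, ENNReal.ofReal (|z.1 - z.2| ^ p) ∂κ
      = ∫⁻ w, κ (Iic w.1 ×ˢ Ici (w.1 + w.2)) ∂costKernel hp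
        + ∫⁻ w, κ.map Prod.swap (Iic w.1 ×ˢ Ici (w.1 + w.2)) ∂costKernel hp := by
  simp_rw [ofReal_abs_sub_rpow_eq hp]
  rw [lintegral_add_left (measurable_costKernel_triangle hp), lintegral_costKernel_triangle,
    ← lintegral_costKernel_triangle hp (κ.map Prod.swap),
    lintegral_map (measurable_costKernel_triangle hp) measurable_swap]
  rfl

theorem lintegral_quantileCoupling_le (hp : 1 ≤ p) (μ ν : Measure ℝ) [IsProbabilityMeasure μ]
    [IsProbabilityMeasure ν] {γ : Measure (ℝ × ℝ)} (hγμ : γ.map Prod.fst = μ)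
    (hγν : γ.map Prod.snd = ν) :
    ∫⁻ z, ENNReal.ofReal (|z.1 - z.2| ^ p) ∂quantileCoupling μ ν
      ≤ ∫⁻ z, ENNReal.ofReal (|z.1 - z.2| ^ p) ∂γ := by
  have := isProbabilityMeasure_of_map_fst hγμ
  have hswapν : (γ.map Prod.swap).map Prod.fst = ν := by
    rwa [Measure.map_map measurable_fst measurable_swap]
  have hswapμ : (γ.map Prod.swap).map Prod.snd = μ := by
    rwa [Measure.map_map measurable_snd measurable_swap]
  rw [lintegral_abs_sub_rpow_eq hp, lintegral_abs_sub_rpow_eq hp, quantileCoupling_map_swap]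
  refine add_le_add (lintegral_mono fun w => ?_) (lintegral_mono fun w => ?_)
  · exact (quantileCoupling_Iic_prod_Ici μ ν _ _).trans
      (sub_measure_Iio_le_of_map μ ν hγμ hγν _ _)
  · exact (quantileCoupling_Iic_prod_Ici ν μ _ _).trans
      (sub_measure_Iio_le_of_map ν μ hswapν hswapμ _ _)

end CostKernel

section Wasserstein

variable {p : ℝ}

lemma WpPow_nonneg {E : Type*} [NormedAddCommGroup E] [MeasurableSpace E] (μ ν : Measure E) :
    0 ≤ WpPow p μ ν :=
  Real.sInf_nonneg fun _ ⟨_, _, _, hc⟩ =>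
    hc ▸ integral_nonneg fun _ => Real.rpow_nonneg (norm_nonneg _) p

lemma WpPow_le_integral {E : Type*} [NormedAddCommGroup E] [MeasurableSpace E]
    {μ ν : Measure E} {γ : Measure (E × E)} (hγμ : γ.map Prod.fst = μ)
    (hγν : γ.map Prod.snd = ν) : WpPow p μ ν ≤ ∫ z, ‖z.1 - z.2‖ ^ p ∂γ :=
  csInf_le ⟨0, fun _ ⟨_, _, _, hc⟩ =>
    hc ▸ integral_nonneg fun _ => Real.rpow_nonneg (norm_nonneg _) p⟩ ⟨γ, hγμ, hγν, rfl⟩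

lemma abs_sub_rpow_le (hp : 1 ≤ p) (a b : ℝ) :
    |a - b| ^ p ≤ 2 ^ (p - 1) * (|a| ^ p + |b| ^ p) :=
  calc |a - b| ^ p ≤ (|a| + |b|) ^ p :=
        Real.rpow_le_rpow (abs_nonneg _) (abs_sub _ _) (by linarith)
    _ ≤ 2 ^ (p - 1) * (|a| ^ p + |b| ^ p) := by
        exact_mod_cast
          NNReal.rpow_add_le_mul_rpow_add_rpow ⟨|a|, abs_nonneg a⟩ ⟨|b|, abs_nonneg b⟩ hp

section Moments

variable {μ ν : Measure ℝ} {γ : Measure (ℝ × ℝ)}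

lemma integrable_abs_sub_rpow_of_map (hp : 1 ≤ p) (hγμ : γ.map Prod.fst = μ)
    (hγν : γ.map Prod.snd = ν) (hμ : Integrable (fun x => |x| ^ p) μ)
    (hν : Integrable (fun x => |x| ^ p) ν) :
    Integrable (fun z : ℝ × ℝ => |z.1 - z.2| ^ p) γ := by
  refine Integrable.mono' ((((hγμ ▸ hμ).comp_measurable measurable_fst).add
      ((hγν ▸ hν).comp_measurable measurable_snd)).const_mul (2 ^ (p - 1)))
    ((measurable_fst.sub measurable_snd).abs.pow_const p).aestronglyMeasurable ?_
  filter_upwards with z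
  rw [Real.norm_of_nonneg (by positivity)]
  exact abs_sub_rpow_le hp z.1 z.2

lemma integral_abs_sub_rpow_le_of_map (hp : 1 ≤ p) (hγμ : γ.map Prod.fst = μ)
    (hγν : γ.map Prod.snd = ν) (hμ : Integrable (fun x => |x| ^ p) μ)
    (hν : Integrable (fun x => |x| ^ p) ν) :
    ∫ z, |z.1 - z.2| ^ p ∂γ ≤ 2 ^ (p - 1) * (∫ x, |x| ^ p ∂μ + ∫ x, |x| ^ p ∂ν) := by
  have hmeas : Measurable fun x : ℝ => |x| ^ p := measurable_id.abs.pow_const p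
  have h₁ : Integrable (fun z : ℝ × ℝ => |z.1| ^ p) γ :=
    (hγμ ▸ hμ).comp_measurable measurable_fst
  have h₂ : Integrable (fun z : ℝ × ℝ => |z.2| ^ p) γ :=
    (hγν ▸ hν).comp_measurable measurable_snd
  rw [← hγμ, ← hγν, integral_map measurable_fst.aemeasurable hmeas.aestronglyMeasurable,
    integral_map measurable_snd.aemeasurable hmeas.aestronglyMeasurable, ← integral_add h₁ h₂,
    ← integral_const_mul]
  exact integral_mono (integrable_abs_sub_rpow_of_map hp hγμ hγν hμ hν)
    ((h₁.add h₂).const_mul _) fun z => abs_sub_rpow_le hp z.1 z.2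

end Moments

variable (μ ν : Measure ℝ) [IsProbabilityMeasure μ] [IsProbabilityMeasure ν]

lemma integral_quantileCoupling :
    ∫ z, ‖z.1 - z.2‖ ^ p ∂quantileCoupling μ ν
      = ∫ u in Ioo 0 1, |quantileFnIoo μ u - quantileFnIoo ν u| ^ p :=
  integral_map (measurable_quantileFnIoo_prodMk μ ν).aemeasurable
    ((measurable_fst.sub measurable_snd).norm.pow_const p).aestronglyMeasurable

lemma WpPow_le_integral_quantileFnIoo :
    WpPow p μ ν ≤ ∫ u in Ioo 0 1, |quantileFnIoo μ u - quantileFnIoo ν u| ^ p :=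
  integral_quantileCoupling μ ν ▸
    WpPow_le_integral (quantileCoupling_map_fst μ ν) (quantileCoupling_map_snd μ ν)

variable {μ ν}

lemma integrableOn_abs_sub_quantileFnIoo_rpow (hp : 1 ≤ p)
    (hμ : Integrable (fun x => |x| ^ p) μ) (hν : Integrable (fun x => |x| ^ p) ν) :
    IntegrableOn (fun u => |quantileFnIoo μ u - quantileFnIoo ν u| ^ p) (Ioo 0 1) :=
  (integrable_abs_sub_rpow_of_map hp (quantileCoupling_map_fst μ ν)
    (quantileCoupling_map_snd μ ν) hμ hν).comp_measurable
      (measurable_quantileFnIoo_prodMk μ ν)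

theorem integral_quantileFnIoo_le_WpPow (hp : 1 ≤ p) (hμ : Integrable (fun x => |x| ^ p) μ)
    (hν : Integrable (fun x => |x| ^ p) ν) :
    ∫ u in Ioo 0 1, |quantileFnIoo μ u - quantileFnIoo ν u| ^ p ≤ WpPow p μ ν := by
  rw [← integral_quantileCoupling]
  refine le_csInf ⟨_, _, quantileCoupling_map_fst μ ν, quantileCoupling_map_snd μ ν, rfl⟩ ?_
  rintro _ ⟨γ, hγμ, hγν, rfl⟩
  have hcost : Measurable fun z : ℝ × ℝ => |z.1 - z.2| ^ p :=
    (measurable_fst.sub measurable_snd).abs.pow_const p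
  have hnonneg : ∀ z : ℝ × ℝ, 0 ≤ |z.1 - z.2| ^ p := fun _ => by positivity
  simp only [Real.norm_eq_abs]
  rw [integral_eq_lintegral_of_nonneg_ae (ae_of_all _ hnonneg) hcost.aestronglyMeasurable,
    integral_eq_lintegral_of_nonneg_ae (ae_of_all _ hnonneg) hcost.aestronglyMeasurable]
  refine ENNReal.toReal_mono ?_ (lintegral_quantileCoupling_le hp μ ν hγμ hγν)
  exact (lintegral_ofReal_ne_top_iff_integrable hcost.aestronglyMeasurable
    (ae_of_all _ hnonneg)).mpr (integrable_abs_sub_rpow_of_map hp hγμ hγν hμ hν)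

theorem WpPow_eq_integral_quantileFnIoo (hp : 1 ≤ p) (hμ : Integrable (fun x => |x| ^ p) μ)
    (hν : Integrable (fun x => |x| ^ p) ν) :
    WpPow p μ ν = ∫ u in Ioo 0 1, |quantileFnIoo μ u - quantileFnIoo ν u| ^ p :=
  (WpPow_le_integral_quantileFnIoo μ ν).antisymm (integral_quantileFnIoo_le_WpPow hp hμ hν)

lemma WpPow_le_moments (hp : 1 ≤ p) (hμ : Integrable (fun x => |x| ^ p) μ)
    (hν : Integrable (fun x => |x| ^ p) ν) :
    WpPow p μ ν ≤ 2 ^ (p - 1) * (∫ x, |x| ^ p ∂μ + ∫ x, |x| ^ p ∂ν) := by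
  refine (WpPow_le_integral (quantileCoupling_map_fst μ ν)
    (quantileCoupling_map_snd μ ν)).trans ?_
  simpa only [Real.norm_eq_abs] using integral_abs_sub_rpow_le_of_map hp
    (quantileCoupling_map_fst μ ν) (quantileCoupling_map_snd μ ν) hμ hν

theorem integrable_WpPow {α : Type*} [MeasurableSpace α] (ρ : Measure α) [IsFiniteMeasure ρ]
    {κ κ' : α → Measure ℝ} [∀ a, IsProbabilityMeasure (κ a)]
    [∀ a, IsProbabilityMeasure (κ' a)] (hκ : Measurable κ) (hκ' : Measurable κ') (hp : 1 ≤ p)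
    (hm : ∀ a, Integrable (fun x => |x| ^ p) (κ a))
    (hm' : ∀ a, Integrable (fun x => |x| ^ p) (κ' a)) {C : ℝ}
    (hC : ∀ a, ∫ x, |x| ^ p ∂κ a + ∫ x, |x| ^ p ∂κ' a ≤ C) :
    Integrable (fun a => WpPow p (κ a) (κ' a)) ρ := by
  have hmeas : StronglyMeasurable fun a =>
      ∫ u in Ioo 0 1, |quantileFnIoo (κ a) u - quantileFnIoo (κ' a) u| ^ p :=
    (((measurable_quantileFnIoo_uncurry hκ).sub (measurable_quantileFnIoo_uncurry hκ')).abs.pow_const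
      p).stronglyMeasurable.integral_prod_right'
  refine Integrable.mono' (integrable_const (2 ^ (p - 1) * C)) (hmeas.aestronglyMeasurable.congr
    (ae_of_all _ fun a => (WpPow_eq_integral_quantileFnIoo hp (hm a) (hm' a)).symm))
    (ae_of_all _ fun a => ?_)
  rw [Real.norm_of_nonneg (WpPow_nonneg _ _)]
  exact (WpPow_le_moments hp (hm a) (hm' a)).trans (by gcongr; exact hC a)

end Wasserstein

section Barycenter

variable {p : ℝ} {ι : Type*} [Fintype ι]

lemma abs_sum_mul_rpow_le (hp : 1 ≤ p) {π : ι → ℝ} (hπ : ∀ k, 0 ≤ π k)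
    (hπs : ∑ k, π k = 1) (a : ι → ℝ) : |∑ k, π k * a k| ^ p ≤ ∑ k, π k * |a k| ^ p :=
  calc |∑ k, π k * a k| ^ p ≤ (∑ k, π k * |a k|) ^ p := by
        refine Real.rpow_le_rpow (abs_nonneg _) ((Finset.abs_sum_le_sum_abs _ _).trans ?_)
          (by linarith)
        simp only [abs_mul, abs_of_nonneg (hπ _), le_refl]
    _ ≤ ∑ k, π k * |a k| ^ p :=
        Real.rpow_arith_mean_le_arith_mean_rpow _ _ _ (fun k _ => hπ k) hπs
          (fun k _ => abs_nonneg _) hp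

theorem WpPow_le_sum_of_quantileFn_eq (hp : 1 ≤ p) (μbar μbar' : Measure ℝ)
    [IsProbabilityMeasure μbar] [IsProbabilityMeasure μbar'] (μ μ' : ι → Measure ℝ)
    [∀ k, IsProbabilityMeasure (μ k)] [∀ k, IsProbabilityMeasure (μ' k)]
    (hμ : ∀ k, Integrable (fun x => |x| ^ p) (μ k))
    (hμ' : ∀ k, Integrable (fun x => |x| ^ p) (μ' k)) {π : ι → ℝ} (hπ : ∀ k, 0 ≤ π k)
    (hπs : ∑ k, π k = 1)
    (hbar : ∀ t ∈ Ioo (0 : ℝ) 1, quantileFn μbar t = ∑ k, π k * quantileFn (μ k) t)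
    (hbar' : ∀ t ∈ Ioo (0 : ℝ) 1, quantileFn μbar' t = ∑ k, π k * quantileFn (μ' k) t) :
    WpPow p μbar μbar' ≤ ∑ k, π k * WpPow p (μ k) (μ' k) := by
  have hint k := (integrableOn_abs_sub_quantileFnIoo_rpow hp (hμ k) (hμ' k)).const_mul (π k)
  calc WpPow p μbar μbar'
      ≤ ∫ u in Ioo 0 1, |quantileFnIoo μbar u - quantileFnIoo μbar' u| ^ p :=
        WpPow_le_integral_quantileFnIoo μbar μbar'
    _ ≤ ∫ u in Ioo 0 1, ∑ k, π k * |quantileFnIoo (μ k) u - quantileFnIoo (μ' k) u| ^ p := by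
        refine integral_mono_of_nonneg (ae_of_all _ fun _ => by positivity)
          (integrable_finsetSum _ fun k _ => hint k) ?_
        filter_upwards [ae_restrict_mem measurableSet_Ioo] with u hu
        simp only [quantileFnIoo_of_mem _ hu, hbar u hu, hbar' u hu, ← Finset.sum_sub_distrib,
          ← mul_sub]
        exact abs_sum_mul_rpow_le hp hπ hπs _
    _ = ∑ k, π k * WpPow p (μ k) (μ' k) := by
        rw [integral_finsetSum _ fun k _ => hint k]
        simp only [integral_const_mul, WpPow_eq_integral_quantileFnIoo hp (hμ _) (hμ' _)]

end Barycenter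

section Slicing

variable {d : ℕ} {p : ℝ}

instance : IsFiniteMeasure (uniformSphere d) := by
  constructor
  rw [uniformSphere, Measure.smul_apply, smul_eq_mul]
  rcases eq_or_ne ((volume : Measure (EuclideanSpace ℝ (Fin d))).toSphere univ) 0 with h | h
  · simp [h]
  · exact ENNReal.inv_mul_cancel h (measure_ne_top _ _) ▸ ENNReal.one_lt_top

lemma continuous_sphProj_uncurry :
    Continuous fun w : Metric.sphere (0 : EuclideanSpace ℝ (Fin d)) 1 × EuclideanSpace ℝ (Fin d) =>
      sphProj w.1 w.2 :=
  (continuous_subtype_val.comp continuous_fst).inner continuous_snd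

lemma measurable_sphProj (θ : Metric.sphere (0 : EuclideanSpace ℝ (Fin d)) 1) :
    Measurable (sphProj θ) :=
  (continuous_sphProj_uncurry.comp (continuous_const.prodMk continuous_id)).measurable

lemma abs_sphProj_le (θ : Metric.sphere (0 : EuclideanSpace ℝ (Fin d)) 1)
    (x : EuclideanSpace ℝ (Fin d)) : |sphProj θ x| ≤ ‖x‖ := by
  simpa [sphProj, norm_eq_of_mem_sphere θ] using
    abs_real_inner_le_norm (θ : EuclideanSpace ℝ (Fin d)) x

instance (μ : Measure (EuclideanSpace ℝ (Fin d))) [IsProbabilityMeasure μ]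
    (θ : Metric.sphere (0 : EuclideanSpace ℝ (Fin d)) 1) :
    IsProbabilityMeasure (μ.map (sphProj θ)) :=
  Measure.isProbabilityMeasure_map (measurable_sphProj θ).aemeasurable

lemma measurable_map_sphProj (μ : Measure (EuclideanSpace ℝ (Fin d))) [SFinite μ] :
    Measurable fun θ => μ.map (sphProj θ) := by
  refine Measure.measurable_of_measurable_coe _ fun s hs => ?_
  simp_rw [Measure.map_apply (measurable_sphProj _) hs]
  exact measurable_measure_prodMk_left (continuous_sphProj_uncurry.measurable hs)

variable {μ : Measure (EuclideanSpace ℝ (Fin d))}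

lemma integrable_abs_rpow_map_sphProj (hp : 0 ≤ p) (hμ : Integrable (fun x => ‖x‖ ^ p) μ)
    (θ : Metric.sphere (0 : EuclideanSpace ℝ (Fin d)) 1) :
    Integrable (fun x => |x| ^ p) (μ.map (sphProj θ)) := by
  rw [integrable_map_measure (continuous_abs.measurable.pow_const p).aestronglyMeasurable
    (measurable_sphProj θ).aemeasurable]
  refine hμ.mono' ((measurable_sphProj θ).abs.pow_const p).aestronglyMeasurable
    (ae_of_all _ fun x => ?_)
  rw [Function.comp_apply, Real.norm_of_nonneg (by positivity)]
  exact Real.rpow_le_rpow (abs_nonneg _) (abs_sphProj_le θ x) hp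

lemma integral_abs_rpow_map_sphProj_le (hp : 0 ≤ p) (hμ : Integrable (fun x => ‖x‖ ^ p) μ)
    (θ : Metric.sphere (0 : EuclideanSpace ℝ (Fin d)) 1) :
    ∫ x, |x| ^ p ∂μ.map (sphProj θ) ≤ ∫ x, ‖x‖ ^ p ∂μ := by
  rw [integral_map (measurable_sphProj θ).aemeasurable
    (continuous_abs.measurable.pow_const p).aestronglyMeasurable]
  exact integral_mono_of_nonneg (ae_of_all _ fun _ => by positivity) hμ
    (ae_of_all _ fun x => Real.rpow_le_rpow (abs_nonneg _) (abs_sphProj_le θ x) hp)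

lemma integrable_WpPow_map_sphProj (hp : 1 ≤ p) {ν : Measure (EuclideanSpace ℝ (Fin d))}
    [IsProbabilityMeasure μ] [IsProbabilityMeasure ν] (hμ : Integrable (fun x => ‖x‖ ^ p) μ)
    (hν : Integrable (fun x => ‖x‖ ^ p) ν) :
    Integrable (fun θ => WpPow p (μ.map (sphProj θ)) (ν.map (sphProj θ))) (uniformSphere d) :=
  integrable_WpPow _ (measurable_map_sphProj μ) (measurable_map_sphProj ν) hp
    (integrable_abs_rpow_map_sphProj (by linarith) hμ)
    (integrable_abs_rpow_map_sphProj (by linarith) hν)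
    fun θ => add_le_add (integral_abs_rpow_map_sphProj_le (by linarith) hμ θ)
      (integral_abs_rpow_map_sphProj_le (by linarith) hν θ)

end Slicing

/-- Stability of the sliced Wasserstein barycenter under perturbation of the marginals. -/
theorem swb_stability_marginals (d K : ℕ) (hK : 2 ≤ K) (p : ℝ) (hp : 1 ≤ p)
    (F F' : Fin K → Measure (EuclideanSpace ℝ (Fin d)))
    [∀ k, IsProbabilityMeasure (F k)] [∀ k, IsProbabilityMeasure (F' k)]
    (hF : ∀ k, Integrable (fun x => ‖x‖ ^ p) (F k))
    (hF' : ∀ k, Integrable (fun x => ‖x‖ ^ p) (F' k))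
    (π : Fin K → ℝ) (hπ : ∀ k, 0 ≤ π k) (hπs : ∑ k, π k = 1)
    (Fbar Fbar' : Measure (EuclideanSpace ℝ (Fin d)))
    [IsProbabilityMeasure Fbar] [IsProbabilityMeasure Fbar']
    (hFbar : ∀ᵐ θ ∂(uniformSphere d), ∀ t ∈ Ioo (0:ℝ) 1,
      quantileFn (Fbar.map (sphProj θ)) t = ∑ k, π k * quantileFn ((F k).map (sphProj θ)) t)
    (hFbar' : ∀ᵐ θ ∂(uniformSphere d), ∀ t ∈ Ioo (0:ℝ) 1,
      quantileFn (Fbar'.map (sphProj θ)) t = ∑ k, π k * quantileFn ((F' k).map (sphProj θ)) t) :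
    SWpPow p Fbar Fbar' ≤ ∑ k, π k * SWpPow p (F k) (F' k) ∧
    ∑ k, π k * SWpPow p (F k) (F' k) ≤
      Finset.univ.sup' (Finset.univ_nonempty_iff.mpr ⟨⟨0, by omega⟩⟩) (fun k => SWpPow p (F k) (F' k)) := by
  have hint k := (integrable_WpPow_map_sphProj hp (hF k) (hF' k)).const_mul (π k)
  refine ⟨?_, ?_⟩
  · calc SWpPow p Fbar Fbar' ≤ ∫ θ, ∑ k, π k * WpPow p ((F k).map (sphProj θ))
          ((F' k).map (sphProj θ)) ∂uniformSphere d := by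
          refine integral_mono_of_nonneg (ae_of_all _ fun _ => WpPow_nonneg _ _)
            (integrable_finsetSum _ fun k _ => hint k) ?_
          filter_upwards [hFbar, hFbar'] with θ hθ hθ'
          exact WpPow_le_sum_of_quantileFn_eq hp _ _ _ _
            (fun k => integrable_abs_rpow_map_sphProj (by linarith) (hF k) θ)
            (fun k => integrable_abs_rpow_map_sphProj (by linarith) (hF' k) θ) hπ hπs hθ hθ'
      _ = ∑ k, π k * SWpPow p (F k) (F' k) := by
          simp only [integral_finsetSum _ fun k _ => hint k, integral_const_mul, SWpPow]
  · have hmean := Finset.centerMass_le_sup (s := Finset.univ) (f := fun k => SWpPow p (F k) (F' k))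
      (fun k _ => hπ k) (hπs ▸ one_pos)
    simpa only [Finset.centerMass, hπs, inv_one, one_smul, smul_eq_mul, one_mul] using hmean
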